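/- Let κ > 0, λ > 0, and let c, a be real numbers. Then A(a) and B(a) do not both vanish; that is, it is not the case that A(a) = 0 and B(a) = 0. -/

import Mathlib

/-- The coefficient `A(a)` of `β₀` in `∂_{β₁} f`. -/
noncomputable def A (c κ lam a : ℝ) : ℝ :=
  -2 * Real.sqrt κ * Real.cos (c * Real.sqrt (κ * lam)) * Real.sinh (Real.sqrt lam * (1 - c))
  + (κ - 1) * Real.sin (c * Real.sqrt (κ * lam)) * Real.cosh (Real.sqrt lam * (1 - c))
  - (κ + 1) * Real.sin (c * Real.sqrt (κ * lam)) * Real.cosh (Real.sqrt lam * (2 * a + c - 1))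

/-- The constant term `B(a)` in `∂_{β₁} f`. -/
noncomputable def B (c κ lam a : ℝ) : ℝ :=
  -2 * Real.sqrt (lam * κ) * Real.cos (c * Real.sqrt (κ * lam)) * Real.cosh (Real.sqrt lam * (1 - c))
  + (κ - 1) * Real.sqrt lam * Real.sin (c * Real.sqrt (κ * lam)) * Real.sinh (Real.sqrt lam * (1 - c))
  - (κ + 1) * Real.sqrt lam * Real.sin (c * Real.sqrt (κ * lam)) * Real.sinh (Real.sqrt lam * (2 * a + c - 1))

/-!
Write `u = √λ (1 - c)`, `v = √λ (2a + c - 1)`, `S = sin (c √(κλ))`, `C = cos (c √(κλ))`.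
Then `A(a)` and `B(a) / √λ` are the two components of a vector which, after the hyperbolic
rotation by `-u`, becomes `(S ((κ - 1) - (κ + 1) cosh (v - u)), -2 √κ C - (κ + 1) S sinh (v - u))`.
Since `cosh ≥ 1`, the factor `(κ - 1) - (κ + 1) cosh (v - u)` is at most `-2`, so both components
vanishing forces `S = 0` and then `C = 0`, contradicting `S² + C² = 1`.
-/

open Real

lemma eq_zero_of_hyperbolic_system_eq_zero {p q r u v : ℝ}
    (hx : p * sinh u + q * cosh u + r * cosh v = 0)
    (hy : p * cosh u + q * sinh u + r * sinh v = 0) :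
    q + r * cosh (v - u) = 0 ∧ p + r * sinh (v - u) = 0 := by
  rw [cosh_sub, sinh_sub]
  constructor
  · linear_combination cosh u * hx - sinh u * hy - q * cosh_sq_sub_sinh_sq u
  · linear_combination cosh u * hy - sinh u * hx - p * cosh_sq_sub_sinh_sq u

lemma sub_sub_mul_cosh_neg {κ : ℝ} (hκ : -1 ≤ κ) (w : ℝ) : (κ - 1) - (κ + 1) * cosh w < 0 := by
  nlinarith [one_le_cosh w]

lemma B_eq_sqrt_mul {c κ lam : ℝ} (hκ : 0 ≤ κ) (a : ℝ) :
    B c κ lam a = √lam *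
      (-2 * √κ * cos (c * √(κ * lam)) * cosh (√lam * (1 - c))
        + (κ - 1) * sin (c * √(κ * lam)) * sinh (√lam * (1 - c))
        - (κ + 1) * sin (c * √(κ * lam)) * sinh (√lam * (2 * a + c - 1))) := by
  rw [B, sqrt_mul' lam hκ]
  ring

theorem stmt6 (κ lam c a : ℝ) (hκ : 0 < κ) (hlam : 0 < lam) :
    ¬ (A c κ lam a = 0 ∧ B c κ lam a = 0) := by
  rintro ⟨hA, hB⟩
  set S := sin (c * √(κ * lam))
  set C := cos (c * √(κ * lam))
  rw [B_eq_sqrt_mul hκ.le, mul_eq_zero, or_iff_right (sqrt_pos.mpr hlam).ne'] at hB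
  obtain ⟨hcosh, hsinh⟩ := eq_zero_of_hyperbolic_system_eq_zero
    (p := -2 * √κ * C) (q := (κ - 1) * S) (r := -(κ + 1) * S)
    (u := √lam * (1 - c)) (v := √lam * (2 * a + c - 1))
    (by rw [A] at hA; linear_combination hA) (by linear_combination hB)
  set w := √lam * (2 * a + c - 1) - √lam * (1 - c)
  have hS : S = 0 := by
    have : S * ((κ - 1) - (κ + 1) * cosh w) = 0 := by linear_combination hcosh
    exact (mul_eq_zero.mp this).resolve_right (sub_sub_mul_cosh_neg (by linarith) w).ne
  have hC : C = 0 := by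
    have : (-2 * √κ) * C = 0 := by linear_combination hsinh - (-(κ + 1) * sinh w) * hS
    exact (mul_eq_zero.mp this).resolve_left (mul_ne_zero (by norm_num) (sqrt_pos.mpr hκ).ne')
  simpa [S, C, hS, hC] using sin_sq_add_cos_sq (c * √(κ * lam))
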